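/- Coefficient form of the bilinear Charlier generating function: for every nonnegative integer N, C_N(a,r)*C_N(b,s) = N! * sum_{t+n+p+q=N} (r*s)^t / t! * (a)_n (b)_n / n! * (n+a)_p s^p / p! * (n+b)_q r^q / q!, where the sum is over all nonnegative integers t, n, p, q with t+n+p+q = N. -/

import Mathlib

open Finset

noncomputable def rf {R : Type*} [CommRing R] (a : R) (k : ℕ) : R :=
  (ascPochhammer R k).eval a

noncomputable def Ch {R : Type*} [CommRing R] (a r : R) (n : ℕ) : R :=
  ∑ k ∈ Finset.range (n + 1), (n.choose k : R) * rf a k * r ^ (n - k)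

lemma rf_add {R : Type*} [CommRing R] (a : R) (n p : ℕ) :
    rf a (n + p) = rf a n * rf (a + n) p := by
  unfold rf
  rw [← ascPochhammer_mul]
  simp [Polynomial.eval_mul, Polynomial.eval_comp]

lemma coeff_eq (N t n p q : ℕ) (h : t + n + p + q = N) :
    (N.factorial : ℚ) * (t.factorial : ℚ)⁻¹ * (n.factorial : ℚ)⁻¹ * (p.factorial : ℚ)⁻¹ *
      (q.factorial : ℚ)⁻¹ =
    ((N.choose (n + p) * ((n + p).choose n * (t + q).choose q) : ℕ) : ℚ) := by
  have h1 : (n + p).choose n * n.factorial * p.factorial = (n + p).factorial := by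
    have := Nat.choose_mul_factorial_mul_factorial (Nat.le_add_right n p)
    simpa using this
  have h2 : (t + q).choose q * q.factorial * t.factorial = (t + q).factorial := by
    have := Nat.choose_mul_factorial_mul_factorial (Nat.le_add_left q t)
    simpa using this
  have h3 : N.choose (n + p) * (n + p).factorial * (t + q).factorial = N.factorial := by
    have := Nat.choose_mul_factorial_mul_factorial (show n + p ≤ N by omega)
    have e : N - (n + p) = t + q := by omega
    rwa [e] at this
  have hNnat : N.choose (n + p) * ((n + p).choose n * (t + q).choose q) *
      (t.factorial * n.factorial * p.factorial * q.factorial) = N.factorial := by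
    calc N.choose (n + p) * ((n + p).choose n * (t + q).choose q) *
        (t.factorial * n.factorial * p.factorial * q.factorial)
        = N.choose (n + p) * ((n + p).choose n * n.factorial * p.factorial) *
          ((t + q).choose q * q.factorial * t.factorial) := by ring
      _ = N.factorial := by rw [h1, h2, h3]
  have hN : (N.factorial : ℚ) =
      (N.choose (n + p) * ((n + p).choose n * (t + q).choose q) : ℕ) *
        (t.factorial * n.factorial * p.factorial * q.factorial : ℕ) := by
    rw [← hNnat]; push_cast; ring
  rw [hN]
  have ht := Nat.factorial_pos t
  have hn := Nat.factorial_pos n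
  have hp := Nat.factorial_pos p
  have hq := Nat.factorial_pos q
  push_cast
  field_simp

lemma nested3 {M : Type*} [AddCommMonoid M] (N : ℕ) (g : ℕ → ℕ → ℕ → M) :
    ∑ t ∈ range (N + 1), ∑ n ∈ range (N - t + 1), ∑ p ∈ range (N - t - n + 1), g t n p =
    ∑ x ∈ (range (N + 1) ×ˢ range (N + 1) ×ˢ range (N + 1)).filter
        (fun x => x.1 + x.2.1 + x.2.2 ≤ N), g x.1 x.2.1 x.2.2 := by
  rw [Finset.sum_filter, Finset.sum_product]
  refine Finset.sum_congr rfl fun t ht => ?_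
  rw [Finset.sum_product]
  rw [Finset.mem_range] at ht
  calc ∑ n ∈ range (N - t + 1), ∑ p ∈ range (N - t - n + 1), g t n p
      = ∑ n ∈ range (N - t + 1), ∑ p ∈ range (N + 1),
          (if t + n + p ≤ N then g t n p else 0) := by
        refine Finset.sum_congr rfl fun n hn => ?_
        rw [Finset.mem_range] at hn
        calc ∑ p ∈ range (N - t - n + 1), g t n p
            = ∑ p ∈ range (N - t - n + 1), (if t + n + p ≤ N then g t n p else 0) := by
              refine Finset.sum_congr rfl fun p hp => ?_
              rw [Finset.mem_range] at hp
              rw [if_pos (by omega)]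
          _ = ∑ p ∈ range (N + 1), (if t + n + p ≤ N then g t n p else 0) := by
              refine Finset.sum_subset
                (Finset.range_subset_range.2 (by omega : N - t - n + 1 ≤ N + 1))
                (fun p hp hp' => ?_)
              rw [Finset.mem_range] at hp hp'
              rw [if_neg (by omega)]
    _ = ∑ n ∈ range (N + 1), ∑ p ∈ range (N + 1),
          (if t + n + p ≤ N then g t n p else 0) := by
        refine Finset.sum_subset (Finset.range_subset_range.2 (by omega : N - t + 1 ≤ N + 1))
          (fun n hn hn' => ?_)
        rw [Finset.mem_range] at hn hn'
        exact Finset.sum_eq_zero fun p hp => if_neg (by omega)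

lemma diag_flatten {M : Type*} [AddCommMonoid M] (N : ℕ) (f : ℕ × ℕ → M) :
    ∑ l ∈ range (N + 1), ∑ x ∈ Finset.HasAntidiagonal.antidiagonal l, f x =
    ∑ x ∈ (range (N + 1) ×ˢ range (N + 1)).filter (fun x => x.1 + x.2 ≤ N), f x := by
  rw [← Finset.sum_fiberwise_of_maps_to (g := fun x : ℕ × ℕ => x.1 + x.2)
      (t := range (N + 1)) (fun x hx => ?_) f]
  · refine Finset.sum_congr rfl fun l hl => ?_
    refine Finset.sum_congr ?_ fun _ _ => rfl
    rw [Finset.mem_range] at hl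
    ext x
    simp only [Finset.mem_filter, Finset.mem_product, Finset.mem_range,
      Finset.HasAntidiagonal.mem_antidiagonal]
    omega
  · simp only [Finset.mem_filter, Finset.mem_product, Finset.mem_range] at hx
    simp only [Finset.mem_range]
    omega

lemma smul4 {R : Type*} [CommRing R] [Algebra ℚ R] (α β γ δ ε : ℚ) (w x y z : R) :
    ε • ((α • w) * (β • x) * (γ • y) * (δ • z)) = (ε * α * β * γ * δ) • (w * x * y * z) := by
  simp only [Algebra.smul_def, map_mul]
  ring

noncomputable def Gf {R : Type*} [CommRing R] [Algebra ℚ R] (N : ℕ) (a b r s : R)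
    (y : ℕ × ℕ × ℕ) : R :=
  ((N.choose y.1 * (y.1.choose y.2.1 * (N - y.1).choose y.2.2) : ℕ) : ℚ) •
    (rf a y.1 * rf b (y.2.1 + y.2.2) * r ^ (N - y.1) * s ^ (N - (y.2.1 + y.2.2)))

/-- Coefficient form of the bilinear Charlier generating function: for every `N`,
`C_N(a,r) C_N(b,s) = N! ∑_{t+n+p+q=N} (rs)^t/t! · (a)_n (b)_n/n! · (n+a)_p s^p/p! · (n+b)_q r^q/q!`. -/
theorem stmt6 {R : Type*} [CommRing R] [Algebra ℚ R] (N : ℕ) (a b r s : R) :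
    Ch a r N * Ch b s N =
      (N.factorial : ℚ) •
        ∑ t ∈ Finset.range (N + 1), ∑ n ∈ Finset.range (N - t + 1),
          ∑ p ∈ Finset.range (N - t - n + 1),
            ((t.factorial : ℚ)⁻¹ • (r * s) ^ t) *
              ((n.factorial : ℚ)⁻¹ • (rf a n * rf b n)) *
              ((p.factorial : ℚ)⁻¹ • (rf (a + (n : R)) p * s ^ p)) *
              (((N - t - n - p).factorial : ℚ)⁻¹ •
                (rf (b + (n : R)) (N - t - n - p) * r ^ (N - t - n - p))) := by
  classical
  set S1 : Finset (ℕ × ℕ × ℕ) :=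
    (range (N + 1) ×ˢ range (N + 1) ×ˢ range (N + 1)).filter
      (fun y => y.2.1 + y.2.2 ≤ N ∧ y.2.1 ≤ y.1 ∧ y.1 + y.2.2 ≤ N) with hS1
  have key : ∀ (m : ℕ) (x : R), ((m : ℚ) • x) = (m : R) * x := fun m x => by
    rw [Nat.cast_smul_eq_nsmul, nsmul_eq_mul]
  have hL : Ch a r N * Ch b s N = ∑ y ∈ S1, Gf N a b r s y := by
    unfold Ch
    rw [Finset.sum_mul_sum]
    calc ∑ k ∈ range (N + 1), ∑ l ∈ range (N + 1),
          (N.choose k : R) * rf a k * r ^ (N - k) * ((N.choose l : R) * rf b l * s ^ (N - l))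
        = ∑ k ∈ range (N + 1), ∑ l ∈ range (N + 1), ∑ x ∈ Finset.HasAntidiagonal.antidiagonal l,
            Gf N a b r s (k, x) := by
          refine Finset.sum_congr rfl fun k hk => Finset.sum_congr rfl fun l hl => ?_
          rw [Finset.mem_range] at hk hl
          have hv : N.choose l = ∑ x ∈ Finset.HasAntidiagonal.antidiagonal l,
              k.choose x.1 * (N - k).choose x.2 := by
            have : N.choose l = (k + (N - k)).choose l := by
              rw [Nat.add_sub_cancel' (by omega : k ≤ N)]
            rw [this, Nat.add_choose_eq]
          have : ∀ x ∈ Finset.HasAntidiagonal.antidiagonal l, Gf N a b r s (k, x) =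
              ((N.choose k * (k.choose x.1 * (N - k).choose x.2) : ℕ) : ℚ) •
                (rf a k * rf b l * r ^ (N - k) * s ^ (N - l)) := by
            intro x hx
            rw [Finset.HasAntidiagonal.mem_antidiagonal] at hx
            simp only [Gf, hx]
          rw [Finset.sum_congr rfl this, ← Finset.sum_smul]
          rw [show (∑ i ∈ Finset.HasAntidiagonal.antidiagonal l,
              ((N.choose k * (k.choose i.1 * (N - k).choose i.2) : ℕ) : ℚ)) =
              ((N.choose k * N.choose l : ℕ) : ℚ) from by
            rw [← Nat.cast_sum, ← Finset.mul_sum, ← hv]]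
          rw [key]
          push_cast
          ring
      _ = ∑ k ∈ range (N + 1),
            ∑ x ∈ (range (N + 1) ×ˢ range (N + 1)).filter (fun x => x.1 + x.2 ≤ N),
              Gf N a b r s (k, x) := by
          exact Finset.sum_congr rfl fun k _ => diag_flatten N _
      _ = ∑ y ∈ range (N + 1) ×ˢ
            ((range (N + 1) ×ˢ range (N + 1)).filter (fun x => x.1 + x.2 ≤ N)),
              Gf N a b r s y := (Finset.sum_product _ _ _).symm
      _ = ∑ y ∈ S1, Gf N a b r s y := by
          refine (Finset.sum_subset (fun y hy => ?_) (fun y hy hy' => ?_)).symm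
          · rw [hS1, Finset.mem_filter, Finset.mem_product, Finset.mem_product] at hy
            simp only [Finset.mem_product, Finset.mem_filter, Finset.mem_range]
            rw [Finset.mem_range, Finset.mem_range, Finset.mem_range] at hy
            exact ⟨hy.1.1, ⟨⟨hy.1.2.1, hy.1.2.2⟩, hy.2.1⟩⟩
          · simp only [Finset.mem_product, Finset.mem_filter, Finset.mem_range] at hy
            rw [hS1, Finset.mem_filter] at hy'
            have : ¬(y.2.1 + y.2.2 ≤ N ∧ y.2.1 ≤ y.1 ∧ y.1 + y.2.2 ≤ N) := by
              intro hc
              exact hy' ⟨by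
                simp only [Finset.mem_product, Finset.mem_range]
                exact ⟨hy.1, hy.2.1⟩, hc⟩
            have hz : y.1.choose y.2.1 * (N - y.1).choose y.2.2 = 0 := by
              rcases Nat.lt_or_ge y.1 y.2.1 with h | h
              · rw [Nat.choose_eq_zero_of_lt h, zero_mul]
              · have : N - y.1 < y.2.2 := by omega
                rw [Nat.choose_eq_zero_of_lt this, mul_zero]
            simp only [Gf, hz, mul_zero, Nat.cast_zero, zero_smul]
  rw [hL, nested3, Finset.smul_sum]
  refine (Finset.sum_nbij'
    (i := fun y : ℕ × ℕ × ℕ => (N - y.1 - y.2.2, y.2.1, y.1 - y.2.1))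
    (j := fun x : ℕ × ℕ × ℕ => (x.2.1 + x.2.2, x.2.1, N - x.1 - x.2.1 - x.2.2))
    ?_ ?_ ?_ ?_ ?_)
  · intro y hy
    rw [hS1, Finset.mem_filter, Finset.mem_product, Finset.mem_product] at hy
    simp only [Finset.mem_range] at hy
    simp only [Finset.mem_filter, Finset.mem_product, Finset.mem_range]
    omega
  · intro x hx
    simp only [Finset.mem_filter, Finset.mem_product, Finset.mem_range] at hx
    rw [hS1]
    simp only [Finset.mem_filter, Finset.mem_product, Finset.mem_range]
    omega
  · intro y hy
    obtain ⟨k, n, j⟩ := y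
    rw [hS1, Finset.mem_filter, Finset.mem_product, Finset.mem_product] at hy
    simp only [Finset.mem_range] at hy
    simp only [Prod.mk.injEq]
    refine ⟨by omega, trivial, by omega⟩
  · intro x hx
    obtain ⟨t, n, p⟩ := x
    simp only [Finset.mem_filter, Finset.mem_product, Finset.mem_range] at hx
    simp only [Prod.mk.injEq]
    refine ⟨by omega, trivial, by omega⟩
  · intro y hy
    rw [hS1, Finset.mem_filter, Finset.mem_product, Finset.mem_product] at hy
    simp only [Finset.mem_range] at hy
    obtain ⟨⟨hk, hn, hj⟩, hnj, hnk, hkj⟩ := hy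
    obtain ⟨k, n, j⟩ := y
    dsimp only at *
    -- target: Gf N a b r s (k,n,j) = N! • bigterm (N-k-j, n, k-n)
    set t := N - k - j with hts
    set p := k - n with hps
    have hq' : N - t - n - p = j := by omega
    rw [hq']
    have e1 : N - k = t + j := by omega
    have e2 : N - (n + j) = t + p := by omega
    have ek : k = n + p := by omega
    rw [smul4, coeff_eq N t n p j (by omega)]
    simp only [Gf]
    rw [e1, e2, ek]
    congr 1
    rw [rf_add a n p, rf_add b n j, mul_pow, pow_add r t j, pow_add s t p]
    ring
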